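/- Define D(s) = -2ψ(1-2s) - 2ψ(1+2s) + 3ψ(1-s) + 3ψ(1+s) for s ∈ [0, 1/38]. Then D(s) = 2∑_{k≥0} (ψ^{(2k)}(1)/(2k)!)·(3 - 2^{2k+1})·s^{2k}, D is increasing on [0,1/38], and -2γ = D(0) ≤ D(s) ≤ D(1/38) < -1.14, where γ is the Euler–Mascheroni constant. -/

import Mathlib

noncomputable def digamma (x : ℝ) : ℝ := deriv (fun y => Real.log (Real.Gamma y)) x

noncomputable def polygamma (n : ℕ) (x : ℝ) : ℝ := iteratedDeriv n digamma x

noncomputable def D (s : ℝ) : ℝ :=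
  -2 * digamma (1 - 2 * s) - 2 * digamma (1 + 2 * s) +
    3 * digamma (1 - s) + 3 * digamma (1 + s)

/-!
Convexity of `log ∘ Gamma` (Bohr–Mollerup) squeezes `ψ x` between `log x - 1 / x` and `log x`;
with `ψ (x + 1) = ψ x + 1 / x` this gives `ψ x = -γ + ∑ (1 / (n + 1) - 1 / (n + x))`, and
termwise differentiation gives `ψ^(m+1) x = (-1)^m (m+1)! ζ(m + 2, x)`. Expanding
`1 / (n + 1 ∓ t)` geometrically and swapping the nonnegative double series yields
`ψ (1 - t) + ψ (1 + t) = -2γ - 2 ∑ ζ(2k + 3) t^(2k+2)`, hence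
`D s = -2γ + ∑ (2^(2k+4) - 6) ζ(2k + 3) s^(2k+2)`, a power series in `s²` with nonnegative
coefficients. For the numerical bound, `ζ(2k + 3) ≤ ζ(2) = π² / 6`, and
`γ ≥ H₁₆ - log 16 - 1 / 32` because `H_n - log n - 1 / (2n)` increases (the trapezoidal rule
overestimates `∫ dx / x`).
-/

open Real Filter Topology Set

local notation "γ" => Real.eulerMascheroniConstant

-- The Hurwitz zeta value `ζ(p, x)`; for `p ≤ 1` the series diverges and the `tsum` is `0`.
noncomputable def hurwitzSum (p : ℕ) (x : ℝ) : ℝ := ∑' n : ℕ, 1 / ((n : ℝ) + x) ^ p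

lemma summable_one_div_nat_add_pow (a : ℝ) {p : ℕ} (hp : 1 < p) :
    Summable fun n : ℕ => 1 / ((n : ℝ) + a) ^ p := by
  refine .of_norm <|
    ((summable_one_div_nat_add_rpow a p).2 (by exact_mod_cast hp)).congr fun n => ?_
  simp

lemma hasDerivAt_one_div_add_pow (a : ℝ) (p : ℕ) {y : ℝ} (hy : a + y ≠ 0) :
    HasDerivAt (fun z => 1 / (a + z) ^ p) (-p / (a + y) ^ (p + 1)) y := by
  have h := (((hasDerivAt_id y).const_add a).fun_pow p).fun_inv (pow_ne_zero p hy)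
  simp only [id, ← one_div] at h
  refine h.congr_deriv ?_
  rcases p with _ | p
  · simp
  · simp only [Nat.add_sub_cancel, mul_one]
    field_simp
    ring

lemma norm_div_nat_add_pow_le {c y : ℝ} (hc : 0 < c) (hy : c ≤ y) (a : ℝ) (n p : ℕ) :
    ‖a / ((n : ℝ) + y) ^ p‖ ≤ ‖a‖ * (1 / ((n : ℝ) + c) ^ p) := by
  have : 0 < (n : ℝ) + c := by positivity
  rw [norm_div, norm_pow, Real.norm_of_nonneg (by linarith : (0 : ℝ) ≤ n + y), div_eq_mul_one_div]
  gcongr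

lemma hasDerivAt_hurwitzSum {p : ℕ} (hp : 2 ≤ p) {x : ℝ} (hx : 0 < x) :
    HasDerivAt (hurwitzSum p) (-p * hurwitzSum (p + 1) x) x := by
  have hc : 0 < x / 2 := half_pos hx
  have key := hasDerivAt_tsum_of_isPreconnected (t := Ioi (x / 2)) (y₀ := x)
    (g := fun (n : ℕ) y => 1 / ((n : ℝ) + y) ^ p)
    (g' := fun (n : ℕ) y => -p / ((n : ℝ) + y) ^ (p + 1))
    ((summable_one_div_nat_add_pow (x / 2) (by omega : 1 < p + 1)).mul_left ‖-(p : ℝ)‖)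
    isOpen_Ioi isPreconnected_Ioi
    (fun n y hy => hasDerivAt_one_div_add_pow _ p (by have := hc.trans hy; positivity))
    (fun n y hy => norm_div_nat_add_pow_le hc (le_of_lt hy) _ n _)
    (half_lt_self hx) (summable_one_div_nat_add_pow x (by omega)) (half_lt_self hx)
  refine key.congr_deriv ?_
  rw [hurwitzSum, ← tsum_mul_left]
  exact tsum_congr fun n => by ring

lemma HasSum.tsum_swap_of_nonneg {β κ : Type*} {f : β → κ → ℝ} (hf : ∀ b c, 0 ≤ f b c)
    {g : β → ℝ} {a : ℝ} (hg : ∀ b, HasSum (f b) (g b)) (ha : HasSum g a) :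
    HasSum (fun c => ∑' b, f b c) a := by
  have hsum : Summable (Function.uncurry f) :=
    (summable_prod_of_nonneg fun p => hf p.1 p.2).2
      ⟨fun b => (hg b).summable, by simpa only [Function.uncurry_apply_pair, (hg _).tsum_eq]
        using ha.summable⟩
  have hprod : HasSum (Function.uncurry f) a :=
    ha.unique (hsum.hasSum.prod_fiberwise hg) ▸ hsum.hasSum
  have hswap : HasSum (fun p : κ × β => f p.2 p.1) a :=
    (Equiv.prodComm κ β).hasSum_iff.2 hprod
  exact hswap.prod_fiberwise fun c => (hswap.summable.prod_factor c).hasSum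

lemma differentiableAt_log_Gamma {x : ℝ} (hx : 0 < x) :
    DifferentiableAt ℝ (fun y => log (Gamma y)) x :=
  (differentiableAt_Gamma fun m => by linarith [(m.cast_nonneg : (0 : ℝ) ≤ m)]).log
    (Gamma_pos_of_pos hx).ne'

lemma log_Gamma_add_one {x : ℝ} (hx : 0 < x) :
    log (Gamma (x + 1)) = log (Gamma x) + log x := by
  rw [Gamma_add_one hx.ne', log_mul hx.ne' (Gamma_pos_of_pos hx).ne', add_comm]

lemma digamma_add_one {x : ℝ} (hx : 0 < x) : digamma (x + 1) = digamma x + 1 / x := by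
  rw [digamma, digamma, ← deriv_comp_add_const, one_div, ← deriv_log,
    ← deriv_add (differentiableAt_log_Gamma hx) (differentiableAt_log hx.ne')]
  refine EventuallyEq.deriv_eq ?_
  filter_upwards [eventually_gt_nhds hx] with y hy using log_Gamma_add_one hy

lemma digamma_add_nat {x : ℝ} (hx : 0 < x) (n : ℕ) :
    digamma (x + n) = digamma x + ∑ k ∈ Finset.range n, 1 / ((k : ℝ) + x) := by
  induction n with
  | zero => simp
  | succ n ih =>
    rw [Nat.cast_succ, ← add_assoc, digamma_add_one (by positivity), ih, Finset.sum_range_succ]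
    ring

lemma slope_log_Gamma {x : ℝ} (hx : 0 < x) :
    slope (fun y => log (Gamma y)) x (x + 1) = log x := by
  rw [slope_def_field, add_sub_cancel_left, div_one, log_Gamma_add_one hx, add_sub_cancel_left]

lemma digamma_le_log {x : ℝ} (hx : 0 < x) : digamma x ≤ log x :=
  (convexOn_log_Gamma.deriv_le_slope hx (mem_Ioi.2 (by linarith)) (lt_add_one x)
    (differentiableAt_log_Gamma hx)).trans_eq (slope_log_Gamma hx)

lemma log_sub_inv_le_digamma {x : ℝ} (hx : 0 < x) : log x - 1 / x ≤ digamma x := by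
  have := (slope_log_Gamma hx).symm.trans_le <| convexOn_log_Gamma.slope_le_deriv hx
    (mem_Ioi.2 (by linarith)) (lt_add_one x) (differentiableAt_log_Gamma (by linarith))
  change log x ≤ digamma (x + 1) at this
  rw [digamma_add_one hx] at this
  linarith

lemma tendsto_digamma_sub_log : Tendsto (fun x => digamma x - log x) atTop (𝓝 0) := by
  have hinv : Tendsto (fun x : ℝ => -x⁻¹) atTop (𝓝 0) := by
    simpa using (tendsto_inv_atTop_zero (𝕜 := ℝ)).neg
  refine tendsto_of_tendsto_of_tendsto_of_le_of_le' hinv tendsto_const_nhds ?_ ?_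
  · filter_upwards [eventually_gt_atTop 0] with x hx
    linarith [log_sub_inv_le_digamma hx, one_div x]
  · filter_upwards [eventually_gt_atTop 0] with x hx
    linarith [digamma_le_log hx]

noncomputable def digammaTerm (n : ℕ) (x : ℝ) : ℝ := 1 / ((n : ℝ) + 1) - 1 / ((n : ℝ) + x)

lemma hasDerivAt_digammaTerm (n : ℕ) {y : ℝ} (hy : 0 < (n : ℝ) + y) :
    HasDerivAt (digammaTerm n) (1 / ((n : ℝ) + y) ^ 2) y := by
  have h := (hasDerivAt_one_div_add_pow (n : ℝ) 1 hy.ne').const_sub (1 / ((n : ℝ) + 1))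
  simp only [pow_one, Nat.cast_one, one_add_one_eq_two, neg_div, neg_neg] at h
  exact h

lemma summable_digammaTerm {x : ℝ} (hx : 0 < x) :
    Summable fun n : ℕ => digammaTerm n x := by
  have hc : 0 < min x 1 / 2 := by positivity
  -- Every term vanishes at `y = 1`, and the derivatives are uniformly summable on the
  -- interval `Ioi (min x 1 / 2)`, which contains both `1` and `x`.
  have h1 : min x 1 / 2 < 1 := by linarith [min_le_right x 1]
  have h2 : min x 1 / 2 < x := by linarith [min_le_left x 1]
  refine summable_of_summable_hasDerivAt_of_isPreconnected (t := Ioi (min x 1 / 2)) (y₀ := 1)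
    ((summable_one_div_nat_add_pow (min x 1 / 2) one_lt_two).mul_left ‖(1 : ℝ)‖)
    isOpen_Ioi isPreconnected_Ioi
    (fun n y hy => hasDerivAt_digammaTerm n (by have := hc.trans hy; positivity))
    (fun n y hy => norm_div_nat_add_pow_le hc (le_of_lt hy) 1 n 2) h1 (by simp [digammaTerm]) h2

lemma hasDerivAt_tsum_digammaTerm {x : ℝ} (hx : 0 < x) :
    HasDerivAt (fun y => ∑' n : ℕ, digammaTerm n y) (hurwitzSum 2 x) x :=
  have hc : 0 < x / 2 := half_pos hx
  hasDerivAt_tsum_of_isPreconnected (t := Ioi (x / 2)) (y₀ := x)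
    ((summable_one_div_nat_add_pow (x / 2) one_lt_two).mul_left ‖(1 : ℝ)‖)
    isOpen_Ioi isPreconnected_Ioi
    (fun n y hy => hasDerivAt_digammaTerm n (by have := hc.trans hy; positivity))
    (fun n y hy => norm_div_nat_add_pow_le hc (le_of_lt hy) 1 n 2) (half_lt_self hx)
    (summable_digammaTerm hx) (half_lt_self hx)

lemma digamma_eq_tsum {x : ℝ} (hx : 0 < x) :
    digamma x = -γ + ∑' n : ℕ, digammaTerm n x := by
  -- For every `n`, `ψ x = (ψ (x + n) - log (x + n)) + (log (x + n) - log n) - (H_n - log n)`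
  -- `+ ∑_{k < n} digammaTerm k x`, and the four pieces tend to `0`, `0`, `γ` and the series.
  have hx_add : Tendsto (fun n : ℕ => x + n) atTop atTop :=
    tendsto_atTop_add_const_left _ _ tendsto_natCast_atTop_atTop
  have hlim := (((tendsto_digamma_sub_log.comp hx_add).add
    ((tendsto_log_comp_add_sub_log x).comp tendsto_natCast_atTop_atTop)).sub
    tendsto_harmonic_sub_log).add (summable_digammaTerm hx).hasSum.tendsto_sum_nat
  refine tendsto_nhds_unique (tendsto_const_nhds.congr fun n => ?_) (by simpa using hlim)
  simp only [harmonic, Rat.cast_sum, Rat.cast_inv, Rat.cast_natCast, digamma_add_nat hx,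
    digammaTerm, Finset.sum_sub_distrib]
  push_cast
  simp only [one_div, add_comm (x : ℝ)]
  ring

lemma digamma_one : digamma 1 = -γ := by
  simp [digamma_eq_tsum one_pos, digammaTerm]

lemma eqOn_iteratedDeriv_digamma (m : ℕ) :
    EqOn (iteratedDeriv (m + 1) digamma)
      (fun x => (-1) ^ m * (m + 1).factorial * hurwitzSum (m + 2) x) (Ioi 0) := by
  induction m with
  | zero =>
    intro x hx
    have hseries : EqOn digamma
        (fun y => -γ + ∑' n : ℕ, digammaTerm n y) (Ioi 0) :=
      fun y hy => digamma_eq_tsum hy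
    rw [iteratedDeriv_one, hseries.deriv isOpen_Ioi hx,
      ((hasDerivAt_tsum_digammaTerm hx).const_add _).deriv]
    simp
  | succ m ih =>
    intro x hx
    rw [iteratedDeriv_succ, ih.deriv isOpen_Ioi hx,
      ((hasDerivAt_hurwitzSum (by omega) hx).const_mul _).deriv]
    push_cast [Nat.factorial_succ, pow_succ]
    ring

lemma polygamma_two_mul_succ_one (k : ℕ) :
    polygamma (2 * (k + 1)) 1 = -((2 * (k + 1)).factorial * hurwitzSum (2 * k + 3) 1) := by
  have h := eqOn_iteratedDeriv_digamma (2 * k + 1) (mem_Ioi.2 one_pos)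
  rw [(Odd.neg_one_pow ⟨k, rfl⟩)] at h
  rw [polygamma, show 2 * (k + 1) = 2 * k + 1 + 1 by ring, h]
  ring

lemma hasSum_neg_digammaTerm_one_sub_add_one_add {t : ℝ} (ht : |t| < 1) (n : ℕ) :
    HasSum (fun k : ℕ => 2 * t ^ (2 * k + 2) / ((n : ℝ) + 1) ^ (2 * k + 3))
      (-(digammaTerm n (1 - t) + digammaTerm n (1 + t))) := by
  have hn : (1 : ℝ) ≤ n + 1 := by linarith [(n.cast_nonneg : (0 : ℝ) ≤ n)]
  have ht' : t ^ 2 < ((n : ℝ) + 1) ^ 2 := by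
    rw [← sq_abs]; exact pow_lt_pow_left₀ (ht.trans_le hn) (abs_nonneg t) two_ne_zero
  have hr : (t / ((n : ℝ) + 1)) ^ 2 < 1 := by
    rwa [div_pow, div_lt_one (by positivity)]
  have hgeom := (hasSum_geometric_of_lt_one (by positivity) hr).mul_left
    (2 * t ^ 2 / ((n : ℝ) + 1) ^ 3)
  have h1 : (0 : ℝ) < n + (1 - t) := by linarith [abs_lt.1 ht]
  have h2 : (0 : ℝ) < n + (1 + t) := by linarith [abs_lt.1 ht]
  have hterm : ∀ k : ℕ, 2 * t ^ (2 * k + 2) / ((n : ℝ) + 1) ^ (2 * k + 3) =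
      2 * t ^ 2 / ((n : ℝ) + 1) ^ 3 * ((t / ((n : ℝ) + 1)) ^ 2) ^ k := fun k => by
    rw [← pow_mul, div_pow]
    field_simp
    ring
  have hsum : -(digammaTerm n (1 - t) + digammaTerm n (1 + t)) =
      2 * t ^ 2 / ((n : ℝ) + 1) ^ 3 * (1 - (t / ((n : ℝ) + 1)) ^ 2)⁻¹ := by
    have : ((n : ℝ) + 1) ^ 2 - t ^ 2 ≠ 0 := by linarith
    rw [digammaTerm, digammaTerm]
    field_simp
    ring
  simpa only [hterm, hsum] using hgeom

lemma hasSum_digamma_one_sub_add_digamma_one_add {t : ℝ} (ht : |t| < 1) :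
    HasSum (fun k : ℕ => 2 * hurwitzSum (2 * k + 3) 1 * t ^ (2 * k + 2))
      (-2 * γ - (digamma (1 - t) + digamma (1 + t))) := by
  have h1 : 0 < 1 - t := by linarith [abs_lt.1 ht]
  have h2 : 0 < 1 + t := by linarith [abs_lt.1 ht]
  have hrows := ((summable_digammaTerm h1).hasSum.add (summable_digammaTerm h2).hasSum).neg
  rw [← add_sub_cancel_left γ (digamma (1 - t)), ← add_sub_cancel_left γ (digamma (1 + t)),
    digamma_eq_tsum h1, digamma_eq_tsum h2]
  have hswap := HasSum.tsum_swap_of_nonneg (fun n k => div_nonneg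
    (mul_nonneg zero_le_two (Even.pow_nonneg ⟨k + 1, by ring⟩ t)) (by positivity))
    (hasSum_neg_digammaTerm_one_sub_add_one_add ht) hrows
  convert hswap using 1
  · funext k
    rw [hurwitzSum, ← tsum_mul_left, ← tsum_mul_right]
    exact tsum_congr fun n => by ring
  · ring

lemma hasSum_D {s : ℝ} (hs : |s| < 1 / 2) :
    HasSum (fun k : ℕ => (2 ^ (2 * k + 4) - 6) * hurwitzSum (2 * k + 3) 1 * s ^ (2 * k + 2))
      (D s + 2 * γ) := by
  have h2 := hasSum_digamma_one_sub_add_digamma_one_add (t := 2 * s)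
    (by rw [abs_mul, abs_two]; linarith)
  have h1 := hasSum_digamma_one_sub_add_digamma_one_add (t := s) (by linarith)
  rw [show D s + 2 * γ = 2 * (-2 * γ - (digamma (1 - 2 * s) + digamma (1 + 2 * s))) -
      3 * (-2 * γ - (digamma (1 - s) + digamma (1 + s))) by rw [D]; ring]
  exact ((h2.mul_left 2).sub (h1.mul_left 3)).congr_fun fun k => by ring

lemma hasSum_taylor_D {s : ℝ} (hs : |s| < 1 / 2) :
    HasSum (fun k : ℕ => polygamma (2 * k) 1 / (2 * k).factorial * (3 - 2 ^ (2 * k + 1)) *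
      s ^ (2 * k)) (D s / 2) := by
  rw [← hasSum_nat_add_iff' 1, Finset.sum_range_one, show D s / 2 - _ = 1 / 2 * (D s + 2 * γ) by
    simp only [polygamma, mul_zero, iteratedDeriv_zero, digamma_one, Nat.factorial_zero,
      Nat.cast_one, div_one, zero_add, pow_one, pow_zero, mul_one]
    ring]
  refine ((hasSum_D hs).mul_left (1 / 2)).congr_fun fun k => ?_
  rw [polygamma_two_mul_succ_one]
  field_simp
  ring

lemma hurwitzSum_nonneg (p : ℕ) {x : ℝ} (hx : 0 ≤ x) : 0 ≤ hurwitzSum p x :=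
  tsum_nonneg fun n => by positivity

lemma six_le_two_pow_two_mul_add_four (k : ℕ) : (6 : ℝ) ≤ 2 ^ (2 * k + 4) :=
  le_trans (by norm_num) (pow_le_pow_right₀ one_le_two (by omega : 4 ≤ 2 * k + 4))

lemma monotoneOn_D : MonotoneOn D (Ico 0 (1 / 2)) := by
  intro a ha b hb hab
  have hterm : ∀ k : ℕ, 0 ≤ ((2 : ℝ) ^ (2 * k + 4) - 6) * hurwitzSum (2 * k + 3) 1 := fun k =>
    mul_nonneg (sub_nonneg.2 (six_le_two_pow_two_mul_add_four k)) (hurwitzSum_nonneg _ zero_le_one)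
  have := hasSum_le (fun k => mul_le_mul_of_nonneg_left (pow_le_pow_left₀ ha.1 hab _) (hterm k))
    (hasSum_D (by rw [abs_of_nonneg ha.1]; exact ha.2))
    (hasSum_D (by rw [abs_of_nonneg hb.1]; exact hb.2))
  linarith

lemma hurwitzSum_two_one : hurwitzSum 2 1 = π ^ 2 / 6 := by
  have h := (hasSum_nat_add_iff' 1).2 hasSum_zeta_two
  simp only [Finset.sum_range_one, Nat.cast_zero, zero_pow two_ne_zero, div_zero, sub_zero,
    Nat.cast_add, Nat.cast_one] at h
  exact h.tsum_eq

lemma hurwitzSum_one_le {p : ℕ} (hp : 2 ≤ p) : hurwitzSum p 1 ≤ π ^ 2 / 6 := by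
  rw [← hurwitzSum_two_one]
  refine Summable.tsum_le_tsum (fun n => ?_) (summable_one_div_nat_add_pow 1 (by omega))
    (summable_one_div_nat_add_pow 1 one_lt_two)
  exact one_div_pow_le_one_div_pow_of_le (by linarith [(n.cast_nonneg : (0 : ℝ) ≤ n)]) hp

lemma D_le {s : ℝ} (hs : |s| < 1 / 2) :
    D s ≤ -2 * γ + π ^ 2 / 6 * (16 * s ^ 2 / (1 - 4 * s ^ 2) - 6 * s ^ 2 / (1 - s ^ 2)) := by
  have hs2 : s ^ 2 < 1 / 4 := by nlinarith [sq_abs s, abs_nonneg s]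
  have hgeom4 := (hasSum_geometric_of_lt_one (by positivity) (by linarith : 4 * s ^ 2 < 1)
    ).mul_left (16 * s ^ 2)
  have hgeom1 := (hasSum_geometric_of_lt_one (by positivity) (by linarith : s ^ 2 < 1)
    ).mul_left (6 * s ^ 2)
  have hbound := ((hgeom4.sub hgeom1).mul_left (π ^ 2 / 6))
  have := hasSum_le (fun k => ?_) (hasSum_D hs) hbound
  · simp only [div_eq_mul_inv] at this ⊢
    linarith
  · rw [show π ^ 2 / 6 * (16 * s ^ 2 * (4 * s ^ 2) ^ k - 6 * s ^ 2 * (s ^ 2) ^ k) =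
        (2 ^ (2 * k + 4) - 6) * (π ^ 2 / 6) * s ^ (2 * k + 2) by
      rw [mul_pow, show (4 : ℝ) = 2 ^ 2 by norm_num, ← pow_mul, ← pow_mul]; ring]
    have := sub_nonneg.2 (six_le_two_pow_two_mul_add_four k)
    have : 0 ≤ s ^ (2 * k + 2) := Even.pow_nonneg ⟨k + 1, by ring⟩ s
    gcongr
    exact hurwitzSum_one_le (by omega)

lemma log_one_add_inv_le {a : ℝ} (ha : 0 < a) : log (1 + a⁻¹) ≤ (a⁻¹ + (a + 1)⁻¹) / 2 := by
  -- `(a⁻¹ + (a + 1)⁻¹) / 2 = 2u / (1 - u²)` is the series of `log (1 + a⁻¹)` without the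
  -- factors `1 / (2k + 1)`.
  set u : ℝ := 1 / (2 * a + 1) with hu
  have hu0 : 0 ≤ u := by positivity
  have hu1 : u < 1 := by rw [hu, div_lt_one (by positivity)]; linarith
  have hgeom := (hasSum_geometric_of_lt_one (sq_nonneg u) (by nlinarith)).mul_left (2 * u)
  have := hasSum_le (fun k => ?_) (hasSum_log_one_add_inv ha) hgeom
  · refine this.trans_eq ?_
    rw [hu, show 1 - (1 / (2 * a + 1)) ^ 2 = 4 * a * (a + 1) / (2 * a + 1) ^ 2 by
      field_simp; ring]
    field_simp
    ring
  · rw [mul_assoc 2 u, ← pow_mul, ← pow_succ', mul_assoc]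
    gcongr
    calc 1 / (2 * (k : ℝ) + 1) * u ^ (2 * k + 1) ≤ 1 * u ^ (2 * k + 1) := by
          gcongr
          rw [div_le_one (by positivity)]
          linarith [(k.cast_nonneg : (0 : ℝ) ≤ k)]
      _ = u ^ (2 * k + 1) := one_mul _

lemma monotone_harmonic_sub_log_sub_inv :
    Monotone fun n : ℕ => (harmonic (n + 1) : ℝ) - log (n + 1) - 1 / (2 * (n + 1)) := by
  refine monotone_nat_of_le_succ fun n => ?_
  have hn : (0 : ℝ) < n + 1 := by positivity
  have hlog : log ((n : ℝ) + 1 + 1) = log (n + 1) + log (1 + (n + 1 : ℝ)⁻¹) := by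
    rw [← log_mul hn.ne' (by positivity)]
    congr 1
    field_simp
  have := log_one_add_inv_le hn
  simp only [harmonic_succ (n + 1), Nat.cast_add, Nat.cast_one, Rat.cast_add, Rat.cast_inv,
    Rat.cast_natCast, hlog]
  simp only [one_div, mul_inv] at this ⊢
  linarith

lemma tendsto_harmonic_sub_log_sub_inv :
    Tendsto (fun n : ℕ => (harmonic (n + 1) : ℝ) - log (n + 1) - 1 / (2 * (n + 1))) atTop
      (𝓝 γ) := by
  have hinv : Tendsto (fun n : ℕ => 1 / (2 * ((n : ℝ) + 1))) atTop (𝓝 0) := by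
    simpa [mul_comm] using tendsto_one_div_add_atTop_nhds_zero_nat.const_mul (1 / 2 : ℝ)
  simpa using (tendsto_harmonic_sub_log.comp (tendsto_add_atTop_nat 1)).sub hinv

lemma eulerMascheroniConstant_ge : 2436559 / 720720 - 4 * log 2 - 1 / 32 ≤ γ := by
  have h := monotone_harmonic_sub_log_sub_inv.ge_of_tendsto tendsto_harmonic_sub_log_sub_inv 15
  rw [show harmonic (15 + 1) = 2436559 / 720720 by norm_num [harmonic, Finset.sum_range_succ],
    show ((15 : ℕ) : ℝ) + 1 = 2 ^ 4 by norm_num, log_pow] at h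
  norm_num at h ⊢
  linarith

lemma D_zero : D 0 = -2 * γ := by
  simp only [D, mul_zero, sub_zero, add_zero, digamma_one]
  ring

lemma D_one_div_thirtyEight_lt : D (1 / 38) < -1.14 := by
  have h := D_le (s := 1 / 38) (by rw [abs_of_pos (by norm_num)]; norm_num)
  have := eulerMascheroniConstant_ge
  have := log_two_lt_d9
  have := pi_lt_d4
  have := pi_pos
  norm_num at h
  nlinarith

theorem D_properties :
    (∀ s ∈ Set.Icc (0 : ℝ) (1 / 38),
      D s = 2 * ∑' k : ℕ,
        polygamma (2 * k) 1 / (Nat.factorial (2 * k)) * (3 - 2 ^ (2 * k + 1)) * s ^ (2 * k)) ∧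
    MonotoneOn D (Set.Icc (0 : ℝ) (1 / 38)) ∧
    D 0 = -2 * Real.eulerMascheroniConstant ∧
    (∀ s ∈ Set.Icc (0 : ℝ) (1 / 38), D 0 ≤ D s ∧ D s ≤ D (1 / 38)) ∧
    D (1 / 38) < -1.14 := by
  have hsmall : ∀ s ∈ Icc (0 : ℝ) (1 / 38), |s| < 1 / 2 := fun s hs => by
    rw [abs_of_nonneg hs.1]; linarith [hs.2]
  have hmono : MonotoneOn D (Icc (0 : ℝ) (1 / 38)) :=
    monotoneOn_D.mono (Icc_subset_Ico_right (by norm_num))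
  have h0 : (0 : ℝ) ∈ Icc 0 (1 / 38) := ⟨le_rfl, by norm_num⟩
  have h38 : (1 / 38 : ℝ) ∈ Icc 0 (1 / 38) := ⟨by norm_num, le_rfl⟩
  refine ⟨fun s hs => ?_, hmono, D_zero,
    fun s hs => ⟨hmono h0 hs hs.1, hmono hs h38 hs.2⟩, D_one_div_thirtyEight_lt⟩
  rw [(hasSum_taylor_D (hsmall s hs)).tsum_eq]
  ring
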